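/- arXiv:2507.08963 — 2 statements merged into one kernel-verified Lean document; each statement's English description precedes it below -/
import Mathlib

section
/- O(1/t^p) rate for conceptual BCOSW (Theorem 5.7): Suppose λ > 0, the aiming condition holds, and the stepsizes are α_t = α/(t+1)^p with p ∈ (1/2, 1) and a constant α satisfying 0 < α·λ < 1. Then limsup_{t→∞} (t+1)^p · E[‖x_t − x*‖²] ≤ α(λ² E[‖x_0 − x*‖²] + (1 + K_p) B*) / (2λ), where K_p := Σ_{t=1}^∞ 1/(t+1)^{2p} (which is finite for p ∈ (1/2,1)). -/
/-!
Write `e_t = E‖x_t - x*‖²`. The factor `(x_t - x*) / √(E_t[d_t²])` is `F_t`-measurable, so it can be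
pulled out of the conditional expectation: this turns the aiming condition into nonnegativity of
the cross term in the expansion of `‖x_{t+1} - x*‖²`. Each coordinate of the normalized direction
`d_t / √(E_t[d_t²])` has second moment at most `1`, which bounds the quadratic term by `B*`. Hence
`e_{t+1} ≤ (1 - α_t λ)² e_t + α_t² B*`.

Multiplied by `(t+1)^p`, this recursion contracts by a factor `≈ 1 - 2λα/(t+1)^p` and adds
`≈ (αB*/λ) · λα/(t+1)^p`. As `∑ (t+1)^(-p) = ∞` and `1/(t+1) = o((t+1)^(-p))` for `p < 1`, a
Chung-type lemma gives `limsup (t+1)^p e_t ≤ αB*/(2λ)`, which is at most the claimed bound.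
-/

open MeasureTheory Filter

/-- The normalized direction `f / √(E[f² | m])`; where `E[f² | m] = 0` it is `0`, as `x / 0 = 0`. -/
noncomputable def condNormalize {Ω : Type*} {mΩ : MeasurableSpace Ω} (μ : Measure Ω)
    (m : MeasurableSpace Ω) (f : Ω → ℝ) : Ω → ℝ :=
  fun ω => f ω / Real.sqrt ((μ[fun ω' => f ω' ^ 2|m]) ω)

section Normalization

variable {Ω : Type*} {m mΩ : MeasurableSpace Ω} {μ : Measure Ω} [IsProbabilityMeasure μ]

/-- The truncation `min (E[g | m])⁻¹ c` is bounded and `m`-measurable, so it can be pulled out of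
the conditional expectation. -/
theorem lintegral_min_inv_condExp_mul_le_one (hm : m ≤ mΩ) {g : Ω → ℝ} (hg_nonneg : 0 ≤ᵐ[μ] g)
    (hg : Integrable g μ) {c : ℝ} (hc : 0 ≤ c) :
    ∫⁻ ω, ENNReal.ofReal (min ((μ[g|m]) ω)⁻¹ c * g ω) ∂μ ≤ 1 := by
  set h := μ[g|m]
  set w : Ω → ℝ := fun ω => min (h ω)⁻¹ c
  have hh_nonneg : 0 ≤ᵐ[μ] h := condExp_nonneg hg_nonneg
  have hw_meas : StronglyMeasurable[m] w :=
    (stronglyMeasurable_condExp.measurable.inv.min measurable_const).stronglyMeasurable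
  have hw_nonneg : 0 ≤ᵐ[μ] w := by
    filter_upwards [hh_nonneg] with ω hω
    exact le_min (inv_nonneg.2 hω) hc
  have hw_bound : ∀ᵐ ω ∂μ, ‖w ω‖ ≤ c := by
    filter_upwards [hw_nonneg] with ω hω
    exact (Real.norm_of_nonneg hω).trans_le (min_le_right _ _)
  have hwg : Integrable (fun ω => w ω * g ω) μ :=
    hg.bdd_mul (hw_meas.mono hm).aestronglyMeasurable hw_bound
  have hwh_le : ∀ᵐ ω ∂μ, w ω * h ω ≤ 1 := by
    filter_upwards [hh_nonneg] with ω hω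
    exact (mul_le_mul_of_nonneg_right (min_le_left _ _) hω).trans inv_mul_le_one
  have hwg_le : ∫ ω, w ω * g ω ∂μ ≤ 1 :=
    calc ∫ ω, w ω * g ω ∂μ = ∫ ω, (μ[w * g|m]) ω ∂μ := (integral_condExp hm).symm
      _ = ∫ ω, w ω * h ω ∂μ :=
        integral_congr_ae (condExp_mul_of_stronglyMeasurable_left hw_meas hwg hg)
      _ ≤ ∫ _, (1 : ℝ) ∂μ := integral_mono_ae (integrable_condExp.bdd_mul
          (hw_meas.mono hm).aestronglyMeasurable hw_bound) (integrable_const 1) hwh_le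
      _ = 1 := by simp
  have hwg_nonneg : 0 ≤ᵐ[μ] fun ω => w ω * g ω := by
    filter_upwards [hw_nonneg, hg_nonneg] with ω hwω hgω
    exact mul_nonneg hwω hgω
  show ∫⁻ ω, ENNReal.ofReal (w ω * g ω) ∂μ ≤ 1
  rw [← ofReal_integral_eq_lintegral_ofReal hwg hwg_nonneg]
  exact ENNReal.ofReal_le_one.2 hwg_le

theorem lintegral_div_condExp_le_one (hm : m ≤ mΩ) {g : Ω → ℝ} (hg_nonneg : 0 ≤ᵐ[μ] g)
    (hg : Integrable g μ) : ∫⁻ ω, ENNReal.ofReal (g ω / (μ[g|m]) ω) ∂μ ≤ 1 := by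
  set h := μ[g|m]
  set G : ℕ → Ω → ENNReal := fun j ω => ENNReal.ofReal (min (h ω)⁻¹ j * g ω)
  have hsup : ∀ᵐ ω ∂μ, ⨆ j, G j ω = ENNReal.ofReal (g ω / h ω) := by
    filter_upwards [hg_nonneg] with ω hω
    obtain ⟨J, hJ⟩ := exists_nat_ge (h ω)⁻¹
    rw [div_eq_inv_mul]
    refine le_antisymm (iSup_le fun j => ?_) (le_iSup_of_le J ?_)
    · exact ENNReal.ofReal_le_ofReal (mul_le_mul_of_nonneg_right (min_le_left _ _) hω)
    · simp only [G, min_eq_left hJ, le_refl]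
  have hmono : ∀ᵐ ω ∂μ, Monotone fun j => G j ω := by
    filter_upwards [hg_nonneg] with ω hω i j hij
    exact ENNReal.ofReal_le_ofReal (mul_le_mul_of_nonneg_right
      (min_le_min_left _ (Nat.cast_le.2 hij)) hω)
  have hmeas (j : ℕ) : AEMeasurable (G j) μ :=
    (((stronglyMeasurable_condExp.measurable.inv.min measurable_const).mono hm
      le_rfl).aemeasurable.mul hg.aemeasurable).ennreal_ofReal
  rw [← lintegral_congr_ae hsup, lintegral_iSup' hmeas hmono]
  exact iSup_le fun j => lintegral_min_inv_condExp_mul_le_one hm hg_nonneg hg j.cast_nonneg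

theorem lintegral_condNormalize_sq_le_one (hm : m ≤ mΩ) {f : Ω → ℝ} (hf : MemLp f 2 μ) :
    ∫⁻ ω, ENNReal.ofReal (condNormalize μ m f ω ^ 2) ∂μ ≤ 1 := by
  have hsq : ∀ᵐ ω ∂μ, ENNReal.ofReal (condNormalize μ m f ω ^ 2)
      = ENNReal.ofReal (f ω ^ 2 / (μ[fun ω' => f ω' ^ 2|m]) ω) := by
    filter_upwards [condExp_nonneg (m := m) (ae_of_all μ fun ω => sq_nonneg (f ω))] with ω hω
    rw [condNormalize, div_pow, Real.sq_sqrt hω]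
  rw [lintegral_congr_ae hsq]
  exact lintegral_div_condExp_le_one hm (ae_of_all μ fun ω => sq_nonneg (f ω)) hf.integrable_sq

theorem memLp_condNormalize (hm : m ≤ mΩ) {f : Ω → ℝ} (hf : MemLp f 2 μ) :
    MemLp (condNormalize μ m f) 2 μ := by
  have hmeas : AEStronglyMeasurable (condNormalize μ m f) μ :=
    (hf.1.aemeasurable.div
      (stronglyMeasurable_condExp.measurable.mono hm le_rfl).sqrt.aemeasurable).aestronglyMeasurable
  refine (memLp_two_iff_integrable_sq hmeas).2 ⟨hmeas.pow 2, ?_⟩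
  rw [hasFiniteIntegral_iff_ofReal (ae_of_all μ fun ω => sq_nonneg _)]
  exact (lintegral_condNormalize_sq_le_one hm hf).trans_lt ENNReal.one_lt_top

theorem integral_condNormalize_sq_le_one (hm : m ≤ mΩ) {f : Ω → ℝ} (hf : MemLp f 2 μ) :
    ∫ ω, condNormalize μ m f ω ^ 2 ∂μ ≤ 1 := by
  rw [← ENNReal.ofReal_le_one, ofReal_integral_eq_lintegral_ofReal
    (memLp_condNormalize hm hf).integrable_sq (ae_of_all μ fun ω => sq_nonneg _)]
  exact lintegral_condNormalize_sq_le_one hm hf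

end Normalization

section SquareLoss

variable {Ω ι : Type*} [Fintype ι] {mΩ : MeasurableSpace Ω} {μ : Measure Ω}

theorem integral_sum_sq_sub_le {δ G : Ω → ι → ℝ} (hδ : ∀ k, MemLp (fun ω => δ ω k) 2 μ)
    (hG : ∀ k, MemLp (fun ω => G ω k) 2 μ) {c β : ℝ} (hc : 0 ≤ c) (hβ : 0 ≤ β)
    (hcross : 0 ≤ ∫ ω, ∑ k, δ ω k * G ω k ∂μ) :
    ∫ ω, ∑ k, (c * δ ω k - β * G ω k) ^ 2 ∂μ
      ≤ c ^ 2 * ∫ ω, ∑ k, δ ω k ^ 2 ∂μ + β ^ 2 * ∫ ω, ∑ k, G ω k ^ 2 ∂μ := by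
  have hδ2 : Integrable (fun ω => ∑ k, δ ω k ^ 2) μ :=
    integrable_finsetSum _ fun k _ => (hδ k).integrable_sq
  have hδG : Integrable (fun ω => ∑ k, δ ω k * G ω k) μ :=
    integrable_finsetSum _ fun k _ => (hδ k).integrable_mul (hG k)
  have hG2 : Integrable (fun ω => ∑ k, G ω k ^ 2) μ :=
    integrable_finsetSum _ fun k _ => (hG k).integrable_sq
  have hexpand : (fun ω => ∑ k, (c * δ ω k - β * G ω k) ^ 2) = fun ω =>
      c ^ 2 * ∑ k, δ ω k ^ 2 - 2 * c * β * ∑ k, δ ω k * G ω k + β ^ 2 * ∑ k, G ω k ^ 2 := by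
    ext ω
    simp only [Finset.mul_sum, ← Finset.sum_sub_distrib, ← Finset.sum_add_distrib]
    exact Finset.sum_congr rfl fun k _ => by ring
  have hδ2_sub_δG : Integrable (fun ω =>
      c ^ 2 * ∑ k, δ ω k ^ 2 - 2 * c * β * ∑ k, δ ω k * G ω k) μ :=
    (hδ2.const_mul _).sub (hδG.const_mul _)
  rw [hexpand, integral_add hδ2_sub_δG (hG2.const_mul _),
    integral_sub (hδ2.const_mul _) (hδG.const_mul _), integral_const_mul, integral_const_mul,
    integral_const_mul]
  nlinarith [mul_nonneg (mul_nonneg (mul_nonneg zero_le_two hc) hβ) hcross]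

variable [IsProbabilityMeasure μ]

theorem integral_add_const_sq_le {g : Ω → ℝ} (hg : MemLp g 2 μ) (hg_sq : ∫ ω, g ω ^ 2 ∂μ ≤ 1)
    (a : ℝ) : ∫ ω, (g ω + a) ^ 2 ∂μ ≤ 1 + 2 * |a| + a ^ 2 := by
  have hmean : |∫ ω, g ω ∂μ| ≤ 1 := by
    have hvar := ProbabilityTheory.variance_eq_sub hg ▸ ProbabilityTheory.variance_nonneg g μ
    rw [← sq_le_one_iff_abs_le_one]
    simp only [Pi.pow_apply] at hvar
    linarith
  have hg1 := hg.integrable one_le_two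
  have hexpand : (fun ω => (g ω + a) ^ 2) = fun ω => g ω ^ 2 + 2 * a * g ω + a ^ 2 := by
    ext ω; ring
  have hg2_add_g : Integrable (fun ω => g ω ^ 2 + 2 * a * g ω) μ :=
    hg.integrable_sq.add (hg1.const_mul _)
  rw [hexpand, integral_add hg2_add_g (integrable_const _),
    integral_add hg.integrable_sq (hg1.const_mul _), integral_const_mul, integral_const]
  have hlinear : a * ∫ ω, g ω ∂μ ≤ |a| := calc
    a * ∫ ω, g ω ∂μ ≤ |a| * |∫ ω, g ω ∂μ| := (le_abs_self _).trans (abs_mul _ _).le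
    _ ≤ |a| := mul_le_of_le_one_right (abs_nonneg a) hmean
  simp only [probReal_univ, one_smul]
  linarith

end SquareLoss

section Step

variable {Ω ι : Type*} [Fintype ι] {m mΩ : MeasurableSpace Ω} {μ : Measure Ω}
  [IsProbabilityMeasure μ]

theorem condExp_mul_condNormalize_add_ae_eq (hm : m ≤ mΩ) {δ f : Ω → ℝ}
    (hδ_meas : StronglyMeasurable[m] δ) (hδ : MemLp δ 2 μ) (hf : MemLp f 2 μ) (c : ℝ) :
    μ[fun ω => δ ω * (condNormalize μ m f ω + c)|m]
      =ᵐ[μ] fun ω => δ ω * ((μ[f|m]) ω / Real.sqrt ((μ[fun ω' => f ω' ^ 2|m]) ω) + c) := by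
  set w : Ω → ℝ := fun ω => δ ω / Real.sqrt ((μ[fun ω' => f ω' ^ 2|m]) ω)
  have hw : StronglyMeasurable[m] w :=
    (hδ_meas.measurable.div stronglyMeasurable_condExp.measurable.sqrt).stronglyMeasurable
  have hwf_eq : w * f = fun ω => δ ω * condNormalize μ m f ω := by
    ext ω
    simp only [w, condNormalize, Pi.mul_apply]
    ring
  have hwf : Integrable (w * f) μ := hwf_eq ▸ hδ.integrable_mul (memLp_condNormalize hm hf)
  have hcδ : Integrable (fun ω => c * δ ω) μ := (hδ.integrable one_le_two).const_mul c
  have hsplit : (fun ω => δ ω * (condNormalize μ m f ω + c)) = w * f + fun ω => c * δ ω := by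
    rw [hwf_eq]
    ext ω
    simp only [Pi.add_apply]
    ring
  have hcδ_cond : μ[fun ω => c * δ ω|m] = fun ω => c * δ ω :=
    condExp_of_stronglyMeasurable hm (hδ_meas.const_mul c) hcδ
  rw [hsplit]
  filter_upwards [condExp_add hwf hcδ m,
    condExp_mul_of_stronglyMeasurable_left hw hwf (hf.integrable one_le_two)] with ω hadd hmul
  rw [hadd, Pi.add_apply, hmul, hcδ_cond, Pi.mul_apply]
  simp only [w]
  ring

theorem integral_sum_mul_condNormalize_add_nonneg (hm : m ≤ mΩ) {lam : ℝ} (xstar : ι → ℝ)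
    {X D : Ω → ι → ℝ} (hX_meas : ∀ k, StronglyMeasurable[m] fun ω => X ω k)
    (hX : ∀ k, MemLp (fun ω => X ω k) 2 μ) (hD : ∀ k, MemLp (fun ω => D ω k) 2 μ)
    (haim : ∀ᵐ ω ∂μ, (∑ k, (X ω k - xstar k) *
        ((μ[fun ω' => D ω' k|m]) ω / Real.sqrt ((μ[fun ω' => (D ω' k) ^ 2|m]) ω)
          + lam * X ω k)) ≥ lam * ∑ k, (X ω k - xstar k) ^ 2) :
    0 ≤ ∫ ω, ∑ k, (X ω k - xstar k)
      * (condNormalize μ m (fun ω => D ω k) ω + lam * xstar k) ∂μ := by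
  set F : ι → Ω → ℝ := fun k ω =>
    (X ω k - xstar k) * (condNormalize μ m (fun ω => D ω k) ω + lam * xstar k)
  have hδ (k : ι) : MemLp (fun ω => X ω k - xstar k) 2 μ := (hX k).sub (memLp_const _)
  have hF (k : ι) : Integrable (F k) μ :=
    (hδ k).integrable_mul ((memLp_condNormalize hm (hD k)).add (memLp_const _))
  have hcond (k : ι) : μ[F k|m] =ᵐ[μ] fun ω => (X ω k - xstar k) *
      ((μ[fun ω' => D ω' k|m]) ω / Real.sqrt ((μ[fun ω' => (D ω' k) ^ 2|m]) ω) + lam * xstar k) :=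
    condExp_mul_condNormalize_add_ae_eq hm ((hX_meas k).sub stronglyMeasurable_const)
      (hδ k) (hD k) _
  have hF_sum : (fun ω => ∑ k, (X ω k - xstar k) *
      (condNormalize μ m (fun ω => D ω k) ω + lam * xstar k)) = ∑ k, F k := by
    ext ω
    simp only [F, Finset.sum_apply]
  rw [hF_sum, ← integral_condExp hm]
  refine integral_nonneg_of_ae ?_
  filter_upwards [condExp_finsetSum (fun k _ => hF k) m,
    eventuallyEq_sum (s := Finset.univ) fun k _ => hcond k, haim] with ω hsum_cond hcond_ω hω
  rw [Pi.zero_apply, hsum_cond, hcond_ω, Finset.sum_apply]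
  have hsplit : ∀ k, (X ω k - xstar k) *
      ((μ[fun ω' => D ω' k|m]) ω / Real.sqrt ((μ[fun ω' => (D ω' k) ^ 2|m]) ω) + lam * xstar k)
      = (X ω k - xstar k) *
        ((μ[fun ω' => D ω' k|m]) ω / Real.sqrt ((μ[fun ω' => (D ω' k) ^ 2|m]) ω) + lam * X ω k)
        - lam * (X ω k - xstar k) ^ 2 := fun k => by ring
  simp only [hsplit, Finset.sum_sub_distrib, ← Finset.mul_sum]
  linarith

theorem integral_sq_dist_iterate_le (hm : m ≤ mΩ) {lam β : ℝ} (hlam : 0 ≤ lam) (hβ : 0 ≤ β)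
    (hβlam : β * lam ≤ 1) (xstar : ι → ℝ) {X D X' : Ω → ι → ℝ}
    (hX_meas : ∀ k, StronglyMeasurable[m] fun ω => X ω k)
    (hX : ∀ k, MemLp (fun ω => X ω k) 2 μ) (hD : ∀ k, MemLp (fun ω => D ω k) 2 μ)
    (hiter : ∀ ω k,
      X' ω k = (1 - β * lam) * X ω k - β * condNormalize μ m (fun ω => D ω k) ω)
    (haim : ∀ᵐ ω ∂μ, (∑ k, (X ω k - xstar k) *
        ((μ[fun ω' => D ω' k|m]) ω / Real.sqrt ((μ[fun ω' => (D ω' k) ^ 2|m]) ω)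
          + lam * X ω k)) ≥ lam * ∑ k, (X ω k - xstar k) ^ 2) :
    ∫ ω, ∑ k, (X' ω k - xstar k) ^ 2 ∂μ
      ≤ (1 - β * lam) ^ 2 * ∫ ω, ∑ k, (X ω k - xstar k) ^ 2 ∂μ
        + β ^ 2 * (Fintype.card ι + lam ^ 2 * ∑ k, xstar k ^ 2 + 2 * lam * ∑ k, |xstar k|) := by
  have hnormalized (k : ι) := memLp_condNormalize hm (hD k)
  have hshift (ω : Ω) (k : ι) : X' ω k - xstar k = (1 - β * lam) * (X ω k - xstar k)
      - β * (condNormalize μ m (fun ω => D ω k) ω + lam * xstar k) := by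
    rw [hiter]
    ring
  simp only [hshift]
  refine (integral_sum_sq_sub_le (δ := fun ω k => X ω k - xstar k)
    (G := fun ω k => condNormalize μ m (fun ω => D ω k) ω + lam * xstar k)
    (fun k => (hX k).sub (memLp_const _))
    (fun k => (hnormalized k).add (memLp_const _)) (by linarith) hβ
    (integral_sum_mul_condNormalize_add_nonneg hm xstar hX_meas hX hD haim)).trans ?_
  gcongr
  calc ∫ ω, ∑ k, (condNormalize μ m (fun ω => D ω k) ω + lam * xstar k) ^ 2 ∂μ
      = ∑ k, ∫ ω, (condNormalize μ m (fun ω => D ω k) ω + lam * xstar k) ^ 2 ∂μ :=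
        integral_finsetSum _ fun k _ => ((hnormalized k).add (memLp_const _)).integrable_sq
    _ ≤ ∑ k, (1 + 2 * |lam * xstar k| + (lam * xstar k) ^ 2) :=
        Finset.sum_le_sum fun k _ => integral_add_const_sq_le (hnormalized k)
          (integral_condNormalize_sq_le_one hm (hD k)) _
    _ = Fintype.card ι + lam ^ 2 * ∑ k, xstar k ^ 2 + 2 * lam * ∑ k, |xstar k| := by
        simp only [Finset.sum_add_distrib, abs_mul, abs_of_nonneg hlam, mul_pow, ← Finset.mul_sum,
          Finset.sum_const, Finset.card_univ, nsmul_eq_mul, mul_one]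
        ring

end Step

section Recursion

open Finset Topology

/-- Beyond the point where the hypotheses hold, `max (u t - M) 0` shrinks by a factor
`exp (-a t)` at each step, and `∑ a = ∞`. -/
theorem tendsto_max_sub_zero_of_le_one_sub_mul_add {u a b : ℕ → ℝ} {M : ℝ}
    (h : ∀ᶠ t in atTop, 0 ≤ a t ∧ a t ≤ 1 ∧ b t ≤ M * a t ∧ u (t + 1) ≤ (1 - a t) * u t + b t)
    (ha : ¬ Summable a) : Tendsto (fun t => max (u t - M) 0) atTop (𝓝 0) := by
  obtain ⟨T, hT⟩ := eventually_atTop.1 h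
  set w : ℕ → ℝ := fun t => max (u t - M) 0
  have hstep (t : ℕ) (ht : T ≤ t) : w (t + 1) ≤ Real.exp (-a t) * w t := by
    obtain ⟨ha0, ha1, hb, hrec⟩ := hT t ht
    refine max_le ?_ (mul_nonneg (Real.exp_pos _).le (le_max_right _ _))
    calc u (t + 1) - M ≤ (1 - a t) * (u t - M) := by nlinarith
      _ ≤ (1 - a t) * w t := mul_le_mul_of_nonneg_left (le_max_left _ _) (by linarith)
      _ ≤ Real.exp (-a t) * w t :=
        mul_le_mul_of_nonneg_right (Real.one_sub_le_exp_neg _) (le_max_right _ _)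
  have htail (k : ℕ) : w (k + T) ≤ Real.exp (-∑ i ∈ range k, a (i + T)) * w T := by
    induction k with
    | zero => simp
    | succ k ih =>
      calc w (k + 1 + T) = w (k + T + 1) := by rw [add_right_comm]
        _ ≤ Real.exp (-a (k + T)) * w (k + T) := hstep _ le_add_self
        _ ≤ Real.exp (-a (k + T)) * (Real.exp (-∑ i ∈ range k, a (i + T)) * w T) :=
          mul_le_mul_of_nonneg_left ih (Real.exp_pos _).le
        _ = Real.exp (-∑ i ∈ range (k + 1), a (i + T)) * w T := by
          rw [sum_range_succ, neg_add, Real.exp_add]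
          ring
  have hsum : Tendsto (fun k => ∑ i ∈ range k, a (i + T)) atTop atTop :=
    (not_summable_iff_tendsto_nat_atTop_of_nonneg fun i => (hT _ le_add_self).1).1
      ((summable_nat_add_iff T).not.2 ha)
  have hdecay : Tendsto (fun k => Real.exp (-∑ i ∈ range k, a (i + T)) * w T) atTop (𝓝 0) := by
    simpa using (Real.tendsto_exp_neg_atTop_nhds_zero.comp hsum).mul_const (w T)
  exact (tendsto_add_atTop_iff_nat T).1 (squeeze_zero (fun k => le_max_right _ _) htail hdecay)

theorem limsup_le_of_le_one_sub_mul_add {u a b : ℕ → ℝ} {L : ℝ} (hu : ∀ t, 0 ≤ u t)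
    (ha : ∀ᶠ t in atTop, 0 ≤ a t ∧ a t ≤ 1) (ha_sum : ¬ Summable a)
    (hb : ∀ ε > 0, ∀ᶠ t in atTop, b t ≤ (L + ε) * a t)
    (hrec : ∀ᶠ t in atTop, u (t + 1) ≤ (1 - a t) * u t + b t) :
    limsup u atTop ≤ L := by
  refine le_of_forall_pos_le_add fun ε hε => ?_
  have hw := tendsto_max_sub_zero_of_le_one_sub_mul_add
    ((ha.and ((hb _ (half_pos hε)).and hrec)).mono fun t h => ⟨h.1.1, h.1.2, h.2.1, h.2.2⟩)
    ha_sum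
  refine limsup_le_of_le (isCoboundedUnder_le_of_le atTop hu) ?_
  filter_upwards [hw.eventually (gt_mem_nhds (half_pos hε))] with t ht
  linarith [le_max_left (u t - (L + ε / 2)) 0]

end Recursion

section Stepsize

theorem add_one_rpow_le {x p : ℝ} (hx : 0 < x) (hp : p ≤ 1) :
    (x + 1) ^ p ≤ (1 + x⁻¹) * x ^ p := by
  have hsplit : x + 1 = x * (1 + x⁻¹) := by field_simp
  rw [hsplit, Real.mul_rpow hx.le (by positivity), mul_comm]
  exact mul_le_mul_of_nonneg_right
    (Real.rpow_le_self_of_one_le (le_add_of_nonneg_right (by positivity)) hp) (by positivity)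

theorem not_summable_div_add_one_rpow {c p : ℝ} (hc : c ≠ 0) (hp : p ≤ 1) :
    ¬ Summable fun t : ℕ => c / ((t : ℝ) + 1) ^ p := by
  intro h
  have hharmonic : Summable fun t : ℕ => 1 / |(t : ℝ) + 1| ^ p := by
    refine ((summable_mul_left_iff (inv_ne_zero hc)).2 h).congr fun t => ?_
    rw [abs_of_nonneg (by positivity)]
    field_simp
  exact not_lt.2 hp ((Real.summable_one_div_nat_add_rpow 1 p).1 hharmonic)

theorem eventually_div_add_one_rpow_le {c p θ : ℝ} (hc : 0 < c) (hp0 : 0 < p) (hp1 : p < 1)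
    (hθ : 0 < θ) :
    ∀ᶠ t : ℕ in atTop, c / ((t : ℝ) + 1) ^ p ≤ θ
      ∧ ((t : ℝ) + 1)⁻¹ ≤ θ * (c / ((t : ℝ) + 1) ^ p) := by
  have hx : Tendsto (fun t : ℕ => (t : ℝ) + 1) atTop atTop :=
    tendsto_atTop_add_const_right atTop 1 tendsto_natCast_atTop_atTop
  filter_upwards [((tendsto_rpow_atTop hp0).comp hx).eventually_ge_atTop (c / θ),
    ((tendsto_rpow_atTop (sub_pos.2 hp1)).comp hx).eventually_ge_atTop (θ * c)⁻¹]
    with t hpow hpow'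
  have ht : (0 : ℝ) < (t : ℝ) + 1 := by positivity
  simp only [Function.comp_apply] at hpow hpow'
  constructor
  · rw [div_le_iff₀ (by positivity)]
    rwa [div_le_iff₀' hθ] at hpow
  · have hrw : θ * (c / ((t : ℝ) + 1) ^ p) = θ * c * ((t : ℝ) + 1) ^ (1 - p) / ((t : ℝ) + 1) := by
      rw [Real.rpow_sub ht, Real.rpow_one]
      field_simp
    rw [hrw, inv_eq_one_div]
    gcongr
    rwa [inv_le_iff_one_le_mul₀ (by positivity), mul_comm] at hpow'

theorem add_one_rpow_mul_le_of_le_sq_mul_add {x p lam α B e₀ e₁ : ℝ} (hx : 0 < x) (hp : p ≤ 1)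
    (hlam : lam ≠ 0) (he₀ : 0 ≤ e₀) (hB : 0 ≤ B)
    (hrec : e₁ ≤ (1 - α / x ^ p * lam) ^ 2 * e₀ + (α / x ^ p) ^ 2 * B) :
    (x + 1) ^ p * e₁ ≤ (1 + x⁻¹) * (1 - lam * α / x ^ p) ^ 2 * (x ^ p * e₀)
      + (1 + x⁻¹) * (α * B / lam) * (lam * α / x ^ p) := by
  calc (x + 1) ^ p * e₁
      ≤ (x + 1) ^ p * ((1 - α / x ^ p * lam) ^ 2 * e₀ + (α / x ^ p) ^ 2 * B) :=
        mul_le_mul_of_nonneg_left hrec (by positivity)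
    _ ≤ (1 + x⁻¹) * x ^ p * ((1 - α / x ^ p * lam) ^ 2 * e₀ + (α / x ^ p) ^ 2 * B) :=
        mul_le_mul_of_nonneg_right (add_one_rpow_le hx hp) (by positivity)
    _ = _ := by field_simp

theorem mul_le_one_sub_one_add_mul_one_sub_sq {y s θ : ℝ} (hy : 0 ≤ y) (hθ : θ ≤ 1 / 2)
    (hyθ : y ≤ θ) (hs : 0 ≤ s) (hsθ : s ≤ θ * y) :
    (2 - 2 * θ) * y ≤ 1 - (1 + s) * (1 - y) ^ 2 := by
  have hsy : s * (1 - y) ^ 2 ≤ s :=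
    mul_le_of_le_one_right hs (pow_le_one₀ (by linarith) (by linarith))
  nlinarith [mul_le_mul_of_nonneg_left hyθ hy]

end Stepsize

theorem limsup_rpow_mul_le_of_le_sq_mul_add {lam α p B : ℝ} (hlam : 0 < lam) (hα : 0 < α)
    (hp0 : 0 < p) (hp1 : p < 1) (hB : 0 ≤ B) {e : ℕ → ℝ} (he : ∀ t, 0 ≤ e t)
    (hrec : ∀ t : ℕ, e (t + 1)
      ≤ (1 - α / ((t : ℝ) + 1) ^ p * lam) ^ 2 * e t + (α / ((t : ℝ) + 1) ^ p) ^ 2 * B) :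
    limsup (fun t : ℕ => ((t : ℝ) + 1) ^ p * e t) atTop ≤ α * B / (2 * lam) := by
  set L := α * B / (2 * lam)
  set y : ℕ → ℝ := fun t => lam * α / ((t : ℝ) + 1) ^ p
  set s : ℕ → ℝ := fun t => ((t : ℝ) + 1)⁻¹
  have hsmall (θ : ℝ) (hθ : 0 < θ) : ∀ᶠ t in atTop, y t ≤ θ ∧ s t ≤ θ * y t :=
    eventually_div_add_one_rpow_le (mul_pos hlam hα) hp0 hp1 hθ
  have hy (t : ℕ) : 0 ≤ y t := by positivity
  have hs (t : ℕ) : 0 ≤ s t := by positivity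
  have hcontract (θ : ℝ) (hθ : θ ≤ 1 / 2) (t : ℕ) (h : y t ≤ θ ∧ s t ≤ θ * y t) :=
    mul_le_one_sub_one_add_mul_one_sub_sq (hy t) hθ h.1 (hs t) h.2
  have hrescaled (t : ℕ) : (((t + 1 : ℕ) : ℝ) + 1) ^ p * e (t + 1)
      ≤ (1 - (1 - (1 + s t) * (1 - y t) ^ 2)) * (((t : ℝ) + 1) ^ p * e t)
        + (1 + s t) * (2 * L) * y t := by
    rw [sub_sub_cancel, show 2 * L = α * B / lam by simp only [L]; field_simp, Nat.cast_succ]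
    exact add_one_rpow_mul_le_of_le_sq_mul_add (by positivity) hp1.le hlam.ne' (he t) hB (hrec t)
  refine limsup_le_of_le_one_sub_mul_add (fun t => mul_nonneg (by positivity) (he t)) ?_ ?_ ?_
    (Eventually.of_forall hrescaled)
  · filter_upwards [hsmall (1 / 2) one_half_pos] with t ht
    have := hcontract (1 / 2) le_rfl t ht
    exact ⟨by nlinarith [hy t], sub_le_self _ (by positivity)⟩
  · intro hsum
    refine not_summable_div_add_one_rpow (mul_pos hlam hα).ne' hp1.le
      (hsum.of_norm_bounded_eventually_nat ?_)
    filter_upwards [hsmall (1 / 2) one_half_pos] with t ht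
    rw [Real.norm_of_nonneg (hy t)]
    linarith [hcontract (1 / 2) le_rfl t ht]
  · intro ε hε
    have hL : 0 ≤ L := by positivity
    set θ := ε / (2 * L + 2 * ε)
    have hθ_mul : θ * (2 * L + 2 * ε) = ε := div_mul_cancel₀ _ (by positivity)
    have hθ0 : 0 < θ := by positivity
    have hθ : θ ≤ 1 / 2 := by nlinarith
    filter_upwards [hsmall θ hθ0] with t ht
    calc (1 + s t) * (2 * L) * y t ≤ (1 + θ) * (2 * L) * y t := by
          gcongr
          nlinarith [hy t]
      _ ≤ (L + ε) * (2 - 2 * θ) * y t := mul_le_mul_of_nonneg_right (by nlinarith) (hy t)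
      _ ≤ (L + ε) * (1 - (1 + s t) * (1 - y t) ^ 2) := by
          rw [mul_assoc]
          gcongr
          exact hcontract θ hθ t ht

section Iterates

variable {Ω ι : Type*} {mΩ : MeasurableSpace Ω} {μ : Measure Ω}
  {F : ℕ → MeasurableSpace Ω} {a b : ℕ → ℝ} {d x : ℕ → Ω → ι → ℝ}

theorem measurable_of_iterate (hF_mono : Monotone F)
    (hd : ∀ t k, Measurable[F (t + 1)] fun ω => d t ω k)
    (hx0 : ∀ k, Measurable[F 0] fun ω => x 0 ω k)
    (hiter : ∀ t ω k,
      x (t + 1) ω k = a t * x t ω k - b t * condNormalize μ (F t) (fun ω => d t ω k) ω)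
    (t : ℕ) (k : ι) : Measurable[F t] fun ω => x t ω k := by
  induction t generalizing k with
  | zero => exact hx0 k
  | succ t ih =>
    simp only [hiter, condNormalize]
    exact (((ih k).mono (hF_mono t.le_succ) le_rfl).const_mul _).sub
      (((hd t k).div (stronglyMeasurable_condExp.measurable.mono
        (hF_mono t.le_succ) le_rfl).sqrt).const_mul _)

theorem memLp_of_iterate [IsProbabilityMeasure μ] (hF_le : ∀ t, F t ≤ mΩ)
    (hd : ∀ t k, MemLp (fun ω => d t ω k) 2 μ) (hx0 : ∀ k, MemLp (fun ω => x 0 ω k) 2 μ)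
    (hiter : ∀ t ω k,
      x (t + 1) ω k = a t * x t ω k - b t * condNormalize μ (F t) (fun ω => d t ω k) ω)
    (t : ℕ) (k : ι) : MemLp (fun ω => x t ω k) 2 μ := by
  induction t generalizing k with
  | zero => exact hx0 k
  | succ t ih =>
    simp only [hiter]
    exact ((ih k).const_mul _).sub ((memLp_condNormalize (hF_le t) (hd t k)).const_mul _)

end Iterates

theorem bcosw_one_over_t_pow_p_rate_general
    {Ω : Type*} {mΩ : MeasurableSpace Ω} {μ : Measure Ω} [IsProbabilityMeasure μ]
    (F : ℕ → MeasurableSpace Ω) (hF_le : ∀ t, F t ≤ mΩ) (hF_mono : Monotone F)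
    {n : ℕ} (lam : ℝ) (hlam : 0 < lam)
    (xstar : Fin n → ℝ) (α p : ℝ) (hp : p ∈ Set.Ioo (1 / 2 : ℝ) 1)
    (hα_pos : 0 < α * lam) (hα_lt : α * lam < 1)
    (αseq : ℕ → ℝ) (hαseq : ∀ t, αseq t = α / ((t : ℝ) + 1) ^ p)
    (d : ℕ → Ω → Fin n → ℝ)
    (hd_meas : ∀ t k, Measurable[F (t + 1)] fun ω => d t ω k)
    (hd_sq_int : ∀ t k, Integrable (fun ω => (d t ω k) ^ 2) μ)
    (x : ℕ → Ω → Fin n → ℝ)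
    (hx0_meas : ∀ k, Measurable[F 0] fun ω => x 0 ω k)
    (hx0_sq_int : ∀ k, Integrable (fun ω => (x 0 ω k) ^ 2) μ)
    (hiter : ∀ t ω k, x (t + 1) ω k
      = (1 - αseq t * lam) * x t ω k
        - αseq t * (d t ω k / Real.sqrt ((μ[fun ω' => (d t ω' k) ^ 2|F t]) ω)))
    (haiming : ∀ t, ∀ᵐ ω ∂μ,
      (∑ k, (x t ω k - xstar k) *
          ((μ[fun ω' => d t ω' k|F t]) ω
              / Real.sqrt ((μ[fun ω' => (d t ω' k) ^ 2|F t]) ω)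
            + lam * x t ω k))
        ≥ lam * ∑ k, (x t ω k - xstar k) ^ 2)
    (Bstar : ℝ)
    (hBstar : Bstar = (n : ℝ) + lam ^ 2 * (∑ k, (xstar k) ^ 2)
        + 2 * lam * ∑ k, |xstar k|)
    (Kp : ℝ) (hKp : Kp = ∑' t : ℕ, 1 / ((t : ℝ) + 2) ^ (2 * p)) :
    Filter.limsup
        (fun t : ℕ => ((t : ℝ) + 1) ^ p * ∫ ω, ∑ k, (x t ω k - xstar k) ^ 2 ∂μ)
        atTop
      ≤ α * (lam ^ 2 * (∫ ω, ∑ k, (x 0 ω k - xstar k) ^ 2 ∂μ) + (1 + Kp) * Bstar)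
          / (2 * lam) := by
  obtain ⟨hp_half, hp1⟩ := hp
  have hα : 0 < α := pos_of_mul_pos_left hα_pos hlam.le
  have hαseq_lam (t : ℕ) : 0 ≤ αseq t ∧ αseq t * lam ≤ 1 := by
    have hpow : 1 ≤ ((t : ℝ) + 1) ^ p :=
      Real.one_le_rpow (le_add_of_nonneg_left t.cast_nonneg) (by linarith)
    rw [hαseq]
    exact ⟨by positivity,
      (mul_le_mul_of_nonneg_right (div_le_self hα.le hpow) hlam.le).trans hα_lt.le⟩
  have hd (t : ℕ) (k : Fin n) : MemLp (fun ω => d t ω k) 2 μ :=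
    (memLp_two_iff_integrable_sq ((hd_meas t k).mono (hF_le _) le_rfl).aestronglyMeasurable).2
      (hd_sq_int t k)
  have hx0 (k : Fin n) : MemLp (fun ω => x 0 ω k) 2 μ :=
    (memLp_two_iff_integrable_sq ((hx0_meas k).mono (hF_le 0) le_rfl).aestronglyMeasurable).2
      (hx0_sq_int k)
  have hx_meas (t : ℕ) (k : Fin n) : StronglyMeasurable[F t] fun ω => x t ω k :=
    (measurable_of_iterate hF_mono hd_meas hx0_meas hiter t k).stronglyMeasurable
  have hdist (t : ℕ) := integral_sq_dist_iterate_le (hF_le t) hlam.le (hαseq_lam t).1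
    (hαseq_lam t).2 xstar (hx_meas t) (memLp_of_iterate hF_le hd hx0 hiter t) (hd t) (hiter t)
    (haiming t)
  simp only [Fintype.card_fin, ← hBstar, hαseq] at hdist
  have hB : 0 ≤ Bstar := by rw [hBstar]; positivity
  have hE0 : 0 ≤ ∫ ω, ∑ k, (x 0 ω k - xstar k) ^ 2 ∂μ := by positivity
  have hKp0 : 0 ≤ Kp := hKp ▸ tsum_nonneg fun t => by positivity
  refine (limsup_rpow_mul_le_of_le_sq_mul_add hlam hα (by linarith) hp1 hB
    (fun t => by positivity) hdist).trans ?_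
  have hB_le : Bstar ≤ lam ^ 2 * (∫ ω, ∑ k, (x 0 ω k - xstar k) ^ 2 ∂μ) + (1 + Kp) * Bstar := by
    nlinarith [mul_nonneg hKp0 hB, mul_nonneg (sq_nonneg lam) hE0]
  gcongr

/-- O(1/t^p) rate for conceptual BCOSW (Theorem 5.7). -/
theorem bcosw_one_over_t_pow_p_rate
    {Ω : Type*} {mΩ : MeasurableSpace Ω} {μ : Measure Ω} [IsProbabilityMeasure μ]
    (F : ℕ → MeasurableSpace Ω) (hF_le : ∀ t, F t ≤ mΩ) (hF_mono : Monotone F)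
    {n : ℕ} (hn : 1 ≤ n) (lam : ℝ) (hlam : 0 < lam)
    (xstar : Fin n → ℝ) (α p : ℝ) (hp : p ∈ Set.Ioo (1 / 2 : ℝ) 1)
    (hα_pos : 0 < α * lam) (hα_lt : α * lam < 1)
    (αseq : ℕ → ℝ) (hαseq : ∀ t, αseq t = α / ((t : ℝ) + 1) ^ p)
    (d : ℕ → Ω → Fin n → ℝ)
    (hd_meas : ∀ t k, Measurable[F (t + 1)] fun ω => d t ω k)
    (hd_sq_int : ∀ t k, Integrable (fun ω => (d t ω k) ^ 2) μ)
    (hd2_pos : ∀ t k, ∀ᵐ ω ∂μ, 0 < (μ[fun ω' => (d t ω' k) ^ 2|F t]) ω)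
    (x : ℕ → Ω → Fin n → ℝ)
    (hx0_meas : ∀ k, Measurable[F 0] fun ω => x 0 ω k)
    (hx0_sq_int : ∀ k, Integrable (fun ω => (x 0 ω k) ^ 2) μ)
    (hiter : ∀ t ω k, x (t + 1) ω k
      = (1 - αseq t * lam) * x t ω k
        - αseq t * (d t ω k / Real.sqrt ((μ[fun ω' => (d t ω' k) ^ 2|F t]) ω)))
    (haiming : ∀ t, ∀ᵐ ω ∂μ,
      (∑ k, (x t ω k - xstar k) *
          ((μ[fun ω' => d t ω' k|F t]) ω
              / Real.sqrt ((μ[fun ω' => (d t ω' k) ^ 2|F t]) ω)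
            + lam * x t ω k))
        ≥ lam * ∑ k, (x t ω k - xstar k) ^ 2)
    (Bstar : ℝ)
    (hBstar : Bstar = (n : ℝ) + lam ^ 2 * (∑ k, (xstar k) ^ 2)
        + 2 * lam * ∑ k, |xstar k|)
    (Kp : ℝ) (hKp : Kp = ∑' t : ℕ, 1 / ((t : ℝ) + 2) ^ (2 * p)) :
    Filter.limsup
        (fun t : ℕ => ((t : ℝ) + 1) ^ p * ∫ ω, ∑ k, (x t ω k - xstar k) ^ 2 ∂μ)
        atTop
      ≤ α * (lam ^ 2 * (∫ ω, ∑ k, (x 0 ω k - xstar k) ^ 2 ∂μ) + (1 + Kp) * Bstar)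
          / (2 * lam) :=
  bcosw_one_over_t_pow_p_rate_general F hF_le hF_mono lam hlam xstar α p hp hα_pos hα_lt αseq hαseq
    d hd_meas hd_sq_int x hx0_meas hx0_sq_int hiter haiming Bstar hBstar Kp hKp
end

section
/- Uniform bound on expected squared distance (inequality (dist-upper-bound)): Suppose the aiming condition holds and α_s ≥ 0 with α_s·λ ≤ 1 for all s ≥ 0. Then for every t ≥ 1, E[‖x_t − x*‖²] ≤ E[‖x_0 − x*‖²] + B* · Σ_{s=0}^{t−1} α_s². -/
/-!
Write `h = d / √(E_t[d²])` coordinatewise, so that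
`x_{t+1} - x* = (1 - αλ)(x_t - x*) - α(h + λx*)`. Expanding the square, the cross term has
nonnegative expectation: `x_t` is `F_t`-measurable, so it only sees `E_t[h] = E_t[d] / √(E_t[d²])`,
and the aiming condition applies. Pulling the `F_t`-measurable factor `1 / E_t[d_k²]` out of the
conditional expectation of `d_k²` (in `ℝ≥0∞`, where no integrability is needed) gives
`E[h_k²] ≤ 1`, hence `E‖h + λx*‖² ≤ B*`. As `(1 - αλ)² ≤ 1`, each step adds at most `α² B*`.
-/

open MeasureTheory Filter

section

variable {Ω : Type*} {m mΩ : MeasurableSpace Ω} {μ : Measure Ω}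

theorem lintegral_condLExp_mul (hm : m ≤ mΩ) [SigmaFinite (μ.trim hm)] {X Y : Ω → ENNReal}
    (hX : AEMeasurable X μ) (hY : Measurable[m] Y) :
    ∫⁻ ω, μ⁻[X|m] ω * Y ω ∂μ = ∫⁻ ω, X ω * Y ω ∂μ := by
  have htrim : (μ.withDensity μ⁻[X|m]).trim hm = (μ.withDensity X).trim hm := by
    refine @Measure.ext _ m _ _ fun s hs => ?_
    rw [trim_measurableSet_eq hm hs, trim_measurableSet_eq hm hs, withDensity_apply _ (hm s hs),
      withDensity_apply _ (hm s hs), setLIntegral_condLExp hm μ X hs]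
  have hY' : AEMeasurable Y μ := (hY.mono hm le_rfl).aemeasurable
  calc ∫⁻ ω, μ⁻[X|m] ω * Y ω ∂μ = ∫⁻ ω, Y ω ∂(μ.withDensity μ⁻[X|m]).trim hm := by
        rw [lintegral_trim hm hY,
          lintegral_withDensity_eq_lintegral_mul₀ (measurable_condLExp' m μ X).aemeasurable hY']
        rfl
    _ = ∫⁻ ω, X ω * Y ω ∂μ := by
        rw [htrim, lintegral_trim hm hY, lintegral_withDensity_eq_lintegral_mul₀ hX hY']
        rfl

theorem lintegral_ofReal_div_condExp_le (hm : m ≤ mΩ) [SigmaFinite (μ.trim hm)] {f : Ω → ℝ}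
    (hf : Integrable f μ) (hf0 : 0 ≤ᵐ[μ] f) :
    ∫⁻ ω, ENNReal.ofReal (f ω / μ[f|m] ω) ∂μ ≤ μ Set.univ := by
  set c := μ[f|m]
  have hc : Measurable[m] fun ω => ENNReal.ofReal (c ω)⁻¹ :=
    stronglyMeasurable_condExp.measurable.inv.ennreal_ofReal
  calc ∫⁻ ω, ENNReal.ofReal (f ω / c ω) ∂μ
      = ∫⁻ ω, ENNReal.ofReal (f ω) * ENNReal.ofReal (c ω)⁻¹ ∂μ := by
        refine lintegral_congr_ae ?_
        filter_upwards [hf0] with ω hω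
        rw [div_eq_mul_inv, ENNReal.ofReal_mul hω]
    _ = ∫⁻ ω, μ⁻[fun ω => ENNReal.ofReal (f ω)|m] ω * ENNReal.ofReal (c ω)⁻¹ ∂μ :=
        (lintegral_condLExp_mul hm hf.1.aemeasurable.ennreal_ofReal hc).symm
    _ = ∫⁻ ω, ENNReal.ofReal (c ω * (c ω)⁻¹) ∂μ := by
        refine lintegral_congr_ae ?_
        filter_upwards [condLExp_ofReal m hf hf0, condExp_nonneg hf0 (m := m)] with ω hω hc0
        rw [hω, ENNReal.ofReal_mul hc0]
    _ ≤ ∫⁻ _, 1 ∂μ := lintegral_mono fun ω => ENNReal.ofReal_le_one.2 mul_inv_le_one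
    _ = μ Set.univ := lintegral_one

theorem ae_nonneg_div_condExp {f : Ω → ℝ} (hf0 : 0 ≤ᵐ[μ] f) :
    0 ≤ᵐ[μ] fun ω => f ω / μ[f|m] ω := by
  filter_upwards [hf0, condExp_nonneg hf0 (m := m)] with ω hω hc using div_nonneg hω hc

theorem integrable_div_condExp (hm : m ≤ mΩ) [IsFiniteMeasure μ] {f : Ω → ℝ}
    (hf : Integrable f μ) (hf0 : 0 ≤ᵐ[μ] f) :
    Integrable (fun ω => f ω / μ[f|m] ω) μ := by
  refine ⟨(hf.1.aemeasurable.div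
    (stronglyMeasurable_condExp.measurable.mono hm le_rfl).aemeasurable).aestronglyMeasurable, ?_⟩
  rw [hasFiniteIntegral_iff_ofReal (ae_nonneg_div_condExp hf0)]
  exact (lintegral_ofReal_div_condExp_le hm hf hf0).trans_lt (measure_lt_top μ _)

theorem integral_div_condExp_le (hm : m ≤ mΩ) [IsFiniteMeasure μ] {f : Ω → ℝ}
    (hf : Integrable f μ) (hf0 : 0 ≤ᵐ[μ] f) :
    ∫ ω, f ω / μ[f|m] ω ∂μ ≤ μ.real Set.univ := by
  rw [integral_eq_lintegral_of_nonneg_ae (ae_nonneg_div_condExp hf0)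
    (integrable_div_condExp hm hf hf0).1]
  exact ENNReal.toReal_mono (measure_ne_top μ _) (lintegral_ofReal_div_condExp_le hm hf hf0)

noncomputable def condRmsNormalize (μ : Measure Ω) (m : MeasurableSpace Ω) (g : Ω → ℝ) : Ω → ℝ :=
  fun ω => g ω / √(μ[fun ω' => g ω' ^ 2|m] ω)

theorem sq_condRmsNormalize_ae_eq {g : Ω → ℝ} :
    (fun ω => condRmsNormalize μ m g ω ^ 2) =ᵐ[μ] fun ω => g ω ^ 2 / μ[fun ω => g ω ^ 2|m] ω := by
  filter_upwards [condExp_nonneg (m := m) (Eventually.of_forall fun ω => sq_nonneg (g ω))]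
    with ω hω
  rw [condRmsNormalize, div_pow, Real.sq_sqrt hω]

theorem memLp_condRmsNormalize (hm : m ≤ mΩ) [IsFiniteMeasure μ] {g : Ω → ℝ}
    (hg : MemLp g 2 μ) : MemLp (condRmsNormalize μ m g) 2 μ := by
  refine (memLp_two_iff_integrable_sq ?_).2 ?_
  · exact (hg.1.aemeasurable.div
      (stronglyMeasurable_condExp.measurable.mono hm le_rfl).sqrt.aemeasurable).aestronglyMeasurable
  · exact (integrable_div_condExp hm hg.integrable_sq
      (Eventually.of_forall fun ω => sq_nonneg _)).congr sq_condRmsNormalize_ae_eq.symm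

theorem integral_sq_condRmsNormalize_le (hm : m ≤ mΩ) [IsFiniteMeasure μ] {g : Ω → ℝ}
    (hg : MemLp g 2 μ) : ∫ ω, condRmsNormalize μ m g ω ^ 2 ∂μ ≤ μ.real Set.univ := by
  rw [integral_congr_ae sq_condRmsNormalize_ae_eq]
  exact integral_div_condExp_le hm hg.integrable_sq (Eventually.of_forall fun ω => sq_nonneg _)

theorem measurable_condRmsNormalize {m' : MeasurableSpace Ω} (hmm' : m ≤ m') {g : Ω → ℝ}
    (hg : Measurable[m'] g) : Measurable[m'] (condRmsNormalize μ m g) :=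
  hg.div (stronglyMeasurable_condExp.measurable.mono hmm' le_rfl).sqrt

theorem condExp_condRmsNormalize (hm : m ≤ mΩ) [IsFiniteMeasure μ] {g : Ω → ℝ}
    (hg : MemLp g 2 μ) :
    μ[condRmsNormalize μ m g|m] =ᵐ[μ] fun ω => μ[g|m] ω / √(μ[fun ω' => g ω' ^ 2|m] ω) := by
  have hsm : StronglyMeasurable[m] fun ω => (√(μ[fun ω' => g ω' ^ 2|m] ω))⁻¹ :=
    (stronglyMeasurable_condExp.measurable.sqrt.inv).stronglyMeasurable
  have heq : condRmsNormalize μ m g = (fun ω => (√(μ[fun ω' => g ω' ^ 2|m] ω))⁻¹) * g :=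
    funext fun ω => div_eq_inv_mul _ _
  have hint := (memLp_condRmsNormalize hm hg).integrable one_le_two
  rw [heq] at hint ⊢
  filter_upwards [condExp_mul_of_stronglyMeasurable_left hsm hint (hg.integrable one_le_two)]
    with ω hω
  rw [hω, Pi.mul_apply, div_eq_inv_mul]

theorem integrable_mul_condExp_of_stronglyMeasurable {Y g : Ω → ℝ} (hY : StronglyMeasurable[m] Y)
    (hYg : Integrable (fun ω => Y ω * g ω) μ) (hg : Integrable g μ) :
    Integrable (fun ω => Y ω * μ[g|m] ω) μ :=
  integrable_condExp.congr (condExp_mul_of_stronglyMeasurable_left hY hYg hg)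

theorem integral_mul_condExp_of_stronglyMeasurable (hm : m ≤ mΩ) [SigmaFinite (μ.trim hm)]
    {Y g : Ω → ℝ} (hY : StronglyMeasurable[m] Y) (hYg : Integrable (fun ω => Y ω * g ω) μ)
    (hg : Integrable g μ) :
    ∫ ω, Y ω * μ[g|m] ω ∂μ = ∫ ω, Y ω * g ω ∂μ := by
  rw [← integral_condExp hm (f := fun ω => Y ω * g ω)]
  exact integral_congr_ae (condExp_mul_of_stronglyMeasurable_left hY hYg hg).symm

variable {ι : Type*} [Fintype ι]

theorem integral_sum_mul_condExp_of_stronglyMeasurable (hm : m ≤ mΩ) [SigmaFinite (μ.trim hm)]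
    {Y g : Ω → ι → ℝ} (hY : ∀ k, StronglyMeasurable[m] fun ω => Y ω k)
    (hYg : ∀ k, Integrable (fun ω => Y ω k * g ω k) μ) (hg : ∀ k, Integrable (fun ω => g ω k) μ) :
    ∫ ω, ∑ k, Y ω k * μ[fun ω' => g ω' k|m] ω ∂μ = ∫ ω, ∑ k, Y ω k * g ω k ∂μ := by
  rw [integral_finsetSum _ fun k _ =>
      integrable_mul_condExp_of_stronglyMeasurable (hY k) (hYg k) (hg k),
    integral_finsetSum _ fun k _ => hYg k]
  exact Finset.sum_congr rfl fun k _ =>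
    integral_mul_condExp_of_stronglyMeasurable hm (hY k) (hYg k) (hg k)

theorem integral_inner_condRmsNormalize_add_nonneg (hm : m ≤ mΩ) [IsFiniteMeasure μ] {lam : ℝ}
    {xstar : ι → ℝ} {y d : Ω → ι → ℝ} (hy_meas : ∀ k, Measurable[m] fun ω => y ω k)
    (hy : ∀ k, MemLp (fun ω => y ω k) 2 μ) (hd : ∀ k, MemLp (fun ω => d ω k) 2 μ)
    (haim : ∀ᵐ ω ∂μ, ∑ k, (y ω k - xstar k) *
        (μ[fun ω' => d ω' k|m] ω / √(μ[fun ω' => d ω' k ^ 2|m] ω) + lam * y ω k)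
      ≥ lam * ∑ k, (y ω k - xstar k) ^ 2) :
    0 ≤ ∫ ω, ∑ k, (y ω k - xstar k) *
      (condRmsNormalize μ m (fun ω' => d ω' k) ω + lam * xstar k) ∂μ := by
  have hv : ∀ k, MemLp (fun ω => condRmsNormalize μ m (fun ω' => d ω' k) ω + lam * xstar k) 2 μ :=
    fun k => (memLp_condRmsNormalize hm (hd k)).add (memLp_const _)
  have hv_cond : ∀ k, μ[fun ω => condRmsNormalize μ m (fun ω' => d ω' k) ω + lam * xstar k|m]
      =ᵐ[μ] fun ω => μ[fun ω' => d ω' k|m] ω / √(μ[fun ω' => d ω' k ^ 2|m] ω) + lam * xstar k := by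
    intro k
    filter_upwards [condExp_add ((memLp_condRmsNormalize hm (hd k)).integrable one_le_two)
      (integrable_const (lam * xstar k)) m, condExp_condRmsNormalize hm (hd k)] with ω h1 h2
    exact h1.trans (by rw [Pi.add_apply, h2, condExp_const hm])
  rw [← integral_sum_mul_condExp_of_stronglyMeasurable hm (Y := fun ω k => y ω k - xstar k)
    (g := fun ω k => condRmsNormalize μ m (fun ω' => d ω' k) ω + lam * xstar k)
    (fun k => ((hy_meas k).sub measurable_const).stronglyMeasurable)
    (fun k => ((hy k).sub (memLp_const _)).integrable_mul (hv k))
    (fun k => (hv k).integrable one_le_two)]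
  refine integral_nonneg_of_ae ?_
  filter_upwards [haim, ae_all_iff.2 hv_cond] with ω hω hcond
  simp only [Pi.zero_apply, hcond]
  have hsplit : ∑ k, (y ω k - xstar k) *
      (μ[fun ω' => d ω' k|m] ω / √(μ[fun ω' => d ω' k ^ 2|m] ω) + lam * xstar k)
      = ∑ k, (y ω k - xstar k) *
        (μ[fun ω' => d ω' k|m] ω / √(μ[fun ω' => d ω' k ^ 2|m] ω) + lam * y ω k)
      - lam * ∑ k, (y ω k - xstar k) ^ 2 := by
    rw [Finset.mul_sum, ← Finset.sum_sub_distrib]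
    exact Finset.sum_congr rfl fun k _ => by ring
  linarith

theorem integral_add_const_sq_le_s9 [IsProbabilityMeasure μ] {u : Ω → ℝ} (hu : MemLp u 2 μ)
    (hu1 : ∫ ω, u ω ^ 2 ∂μ ≤ 1) (c : ℝ) : ∫ ω, (u ω + c) ^ 2 ∂μ ≤ (1 + |c|) ^ 2 := by
  have hu_int := hu.integrable one_le_two
  have hmean : |∫ ω, u ω ∂μ| ≤ 1 := by
    have hvar := ProbabilityTheory.variance_nonneg u μ
    rw [ProbabilityTheory.variance_eq_sub hu] at hvar
    exact (sq_le_one_iff_abs_le_one _).1 (by simp only [Pi.pow_apply] at hvar; linarith)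
  have hexpand : ∫ ω, (u ω + c) ^ 2 ∂μ = ∫ ω, u ω ^ 2 ∂μ + 2 * c * ∫ ω, u ω ∂μ + c ^ 2 := by
    rw [integral_congr_ae (g := fun ω => (u ω ^ 2 + 2 * c * u ω) + c ^ 2)
        (Eventually.of_forall fun ω => by ring),
      integral_add (f := fun ω => u ω ^ 2 + 2 * c * u ω)
        (hu.integrable_sq.add (hu_int.const_mul _)) (integrable_const _),
      integral_add hu.integrable_sq (hu_int.const_mul _), integral_const_mul, integral_const]
    simp
  have hcross : c * ∫ ω, u ω ∂μ ≤ |c| :=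
    calc c * ∫ ω, u ω ∂μ ≤ |c| * |∫ ω, u ω ∂μ| := (le_abs_self _).trans_eq (abs_mul _ _)
      _ ≤ |c| := mul_le_of_le_one_right (abs_nonneg c) hmean
  rw [hexpand, add_sq, sq_abs]
  linarith

theorem integral_sum_sq_mul_sub_mul_le [IsFiniteMeasure μ] {D v : Ω → ι → ℝ} {a b : ℝ}
    (hD : ∀ k, MemLp (fun ω => D ω k) 2 μ) (hv : ∀ k, MemLp (fun ω => v ω k) 2 μ)
    (ha : 0 ≤ a) (hb0 : 0 ≤ b) (hb1 : b ≤ 1) (hDv : 0 ≤ ∫ ω, ∑ k, D ω k * v ω k ∂μ) :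
    ∫ ω, ∑ k, (b * D ω k - a * v ω k) ^ 2 ∂μ
      ≤ ∫ ω, ∑ k, D ω k ^ 2 ∂μ + a ^ 2 * ∫ ω, ∑ k, v ω k ^ 2 ∂μ := by
  have hD2 : Integrable (fun ω => ∑ k, D ω k ^ 2) μ :=
    integrable_finsetSum _ fun k _ => (hD k).integrable_sq
  have hDv_int : Integrable (fun ω => ∑ k, D ω k * v ω k) μ :=
    integrable_finsetSum _ fun k _ => (hD k).integrable_mul (hv k)
  have hv2 : Integrable (fun ω => ∑ k, v ω k ^ 2) μ :=
    integrable_finsetSum _ fun k _ => (hv k).integrable_sq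
  have hexpand : ∀ ω, ∑ k, (b * D ω k - a * v ω k) ^ 2 = b ^ 2 * ∑ k, D ω k ^ 2
      - 2 * a * b * ∑ k, D ω k * v ω k + a ^ 2 * ∑ k, v ω k ^ 2 := fun ω => by
    simp only [Finset.mul_sum, ← Finset.sum_sub_distrib, ← Finset.sum_add_distrib]
    exact Finset.sum_congr rfl fun k _ => by ring
  simp only [hexpand]
  have h12 : Integrable (fun ω => b ^ 2 * ∑ k, D ω k ^ 2 - 2 * a * b * ∑ k, D ω k * v ω k) μ :=
    (hD2.const_mul _).sub (hDv_int.const_mul _)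
  rw [integral_add h12 (hv2.const_mul _),
    integral_sub (hD2.const_mul _) (hDv_int.const_mul _), integral_const_mul,
    integral_const_mul, integral_const_mul]
  have hb2 : b ^ 2 ≤ 1 := pow_le_one₀ hb0 hb1
  have hS : 0 ≤ ∫ ω, ∑ k, D ω k ^ 2 ∂μ :=
    integral_nonneg fun ω => Finset.sum_nonneg fun k _ => sq_nonneg _
  nlinarith [mul_nonneg (mul_nonneg ha hb0) hDv]

theorem integral_sum_sq_condRmsNormalize_add_le (hm : m ≤ mΩ) [IsProbabilityMeasure μ]
    {lam : ℝ} (hlam : 0 ≤ lam) (xstar : ι → ℝ) {d : Ω → ι → ℝ}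
    (hd : ∀ k, MemLp (fun ω => d ω k) 2 μ) :
    ∫ ω, ∑ k, (condRmsNormalize μ m (fun ω' => d ω' k) ω + lam * xstar k) ^ 2 ∂μ
      ≤ Fintype.card ι + lam ^ 2 * ∑ k, xstar k ^ 2 + 2 * lam * ∑ k, |xstar k| := by
  have hv : ∀ k, MemLp (fun ω => condRmsNormalize μ m (fun ω' => d ω' k) ω + lam * xstar k) 2 μ :=
    fun k => (memLp_condRmsNormalize hm (hd k)).add (memLp_const _)
  rw [integral_finsetSum _ fun k _ => (hv k).integrable_sq]
  calc ∑ k, ∫ ω, (condRmsNormalize μ m (fun ω' => d ω' k) ω + lam * xstar k) ^ 2 ∂μ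
      ≤ ∑ k, (1 + |lam * xstar k|) ^ 2 := Finset.sum_le_sum fun k _ =>
        integral_add_const_sq_le_s9 (memLp_condRmsNormalize hm (hd k))
          ((integral_sq_condRmsNormalize_le hm (hd k)).trans_eq probReal_univ) _
    _ = Fintype.card ι + lam ^ 2 * ∑ k, xstar k ^ 2 + 2 * lam * ∑ k, |xstar k| := by
        simp only [abs_mul, abs_of_nonneg hlam, add_sq, Finset.sum_add_distrib, Finset.mul_sum]
        simp [mul_pow, mul_assoc]
        ring

theorem integral_sum_sq_condRmsNormalize_step_le (hm : m ≤ mΩ) [IsProbabilityMeasure μ]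
    {lam a : ℝ} (hlam : 0 ≤ lam) (ha : 0 ≤ a) (halam : a * lam ≤ 1) {xstar : ι → ℝ}
    {y y' d : Ω → ι → ℝ} (hy_meas : ∀ k, Measurable[m] fun ω => y ω k)
    (hy : ∀ k, MemLp (fun ω => y ω k) 2 μ) (hd : ∀ k, MemLp (fun ω => d ω k) 2 μ)
    (hy' : ∀ ω k, y' ω k
      = (1 - a * lam) * y ω k - a * condRmsNormalize μ m (fun ω' => d ω' k) ω)
    (haim : ∀ᵐ ω ∂μ, ∑ k, (y ω k - xstar k) *
        (μ[fun ω' => d ω' k|m] ω / √(μ[fun ω' => d ω' k ^ 2|m] ω) + lam * y ω k)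
      ≥ lam * ∑ k, (y ω k - xstar k) ^ 2) :
    ∫ ω, ∑ k, (y' ω k - xstar k) ^ 2 ∂μ ≤ ∫ ω, ∑ k, (y ω k - xstar k) ^ 2 ∂μ
      + a ^ 2 * (Fintype.card ι + lam ^ 2 * ∑ k, xstar k ^ 2 + 2 * lam * ∑ k, |xstar k|) := by
  calc ∫ ω, ∑ k, (y' ω k - xstar k) ^ 2 ∂μ
      = ∫ ω, ∑ k, ((1 - a * lam) * (y ω k - xstar k)
          - a * (condRmsNormalize μ m (fun ω' => d ω' k) ω + lam * xstar k)) ^ 2 ∂μ := by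
        simp only [hy']
        exact integral_congr_ae (Eventually.of_forall fun ω =>
          Finset.sum_congr rfl fun k _ => by ring)
    _ ≤ ∫ ω, ∑ k, (y ω k - xstar k) ^ 2 ∂μ + a ^ 2 *
          ∫ ω, ∑ k, (condRmsNormalize μ m (fun ω' => d ω' k) ω + lam * xstar k) ^ 2 ∂μ :=
        integral_sum_sq_mul_sub_mul_le (fun k => (hy k).sub (memLp_const _))
          (fun k => (memLp_condRmsNormalize hm (hd k)).add (memLp_const _)) ha
          (sub_nonneg.2 halam) (sub_le_self _ (mul_nonneg ha hlam))
          (integral_inner_condRmsNormalize_add_nonneg hm hy_meas hy hd haim)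
    _ ≤ _ := by
        gcongr
        exact integral_sum_sq_condRmsNormalize_add_le hm hlam xstar hd

end

theorem le_add_sum_range_of_succ_le {u w : ℕ → ℝ} (h : ∀ t, u (t + 1) ≤ u t + w t) (t : ℕ) :
    u t ≤ u 0 + ∑ s ∈ Finset.range t, w s := by
  induction t with
  | zero => simp
  | succ t ih => rw [Finset.sum_range_succ]; linarith [h t]

theorem bcosw_dist_upper_bound_general
    {Ω : Type*} {mΩ : MeasurableSpace Ω} {μ : Measure Ω} [IsProbabilityMeasure μ]
    (F : ℕ → MeasurableSpace Ω) (hF_le : ∀ t, F t ≤ mΩ) (hF_mono : Monotone F)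
    {n : ℕ} (lam : ℝ) (hlam : 0 ≤ lam)
    (xstar : Fin n → ℝ) (α : ℕ → ℝ)
    (hα : ∀ s, 0 ≤ α s) (hαlam : ∀ s, α s * lam ≤ 1)
    (d : ℕ → Ω → Fin n → ℝ)
    (hd_meas : ∀ t k, Measurable[F (t + 1)] fun ω => d t ω k)
    (hd_sq_int : ∀ t k, Integrable (fun ω => (d t ω k) ^ 2) μ)
    (x : ℕ → Ω → Fin n → ℝ)
    (hx0_meas : ∀ k, Measurable[F 0] fun ω => x 0 ω k)
    (hx0_sq_int : ∀ k, Integrable (fun ω => (x 0 ω k) ^ 2) μ)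
    (hiter : ∀ t ω k, x (t + 1) ω k
      = (1 - α t * lam) * x t ω k
        - α t * (d t ω k / Real.sqrt ((μ[fun ω' => (d t ω' k) ^ 2|F t]) ω)))
    (haiming : ∀ t, ∀ᵐ ω ∂μ,
      (∑ k, (x t ω k - xstar k) *
          ((μ[fun ω' => d t ω' k|F t]) ω
              / Real.sqrt ((μ[fun ω' => (d t ω' k) ^ 2|F t]) ω)
            + lam * x t ω k))
        ≥ lam * ∑ k, (x t ω k - xstar k) ^ 2)
    (Bstar : ℝ)
    (hBstar : Bstar = (n : ℝ) + lam ^ 2 * (∑ k, (xstar k) ^ 2)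
        + 2 * lam * ∑ k, |xstar k|) :
    ∀ t : ℕ, 1 ≤ t →
      (∫ ω, ∑ k, (x t ω k - xstar k) ^ 2 ∂μ)
        ≤ (∫ ω, ∑ k, (x 0 ω k - xstar k) ^ 2 ∂μ)
          + Bstar * ∑ s ∈ Finset.range t, (α s) ^ 2 := by
  have hd : ∀ t k, MemLp (fun ω => d t ω k) 2 μ := fun t k =>
    (memLp_two_iff_integrable_sq ((hd_meas t k).mono (hF_le (t + 1)) le_rfl).aestronglyMeasurable).2
      (hd_sq_int t k)
  have hx : ∀ t, (∀ k, Measurable[F t] fun ω => x t ω k) ∧ ∀ k, MemLp (fun ω => x t ω k) 2 μ := by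
    intro t
    induction t with
    | zero =>
      exact ⟨hx0_meas, fun k => (memLp_two_iff_integrable_sq
        ((hx0_meas k).mono (hF_le 0) le_rfl).aestronglyMeasurable).2 (hx0_sq_int k)⟩
    | succ t ih =>
      have hxk : ∀ k, (fun ω => x (t + 1) ω k) = fun ω => (1 - α t * lam) * x t ω k
          - α t * condRmsNormalize μ (F t) (fun ω' => d t ω' k) ω :=
        fun k => funext fun ω => hiter t ω k
      refine ⟨fun k => ?_, fun k => ?_⟩ <;> rw [hxk k]
      · exact (((ih.1 k).mono (hF_mono t.le_succ) le_rfl).const_mul _).sub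
          ((measurable_condRmsNormalize (hF_mono t.le_succ) (hd_meas t k)).const_mul _)
      · exact ((ih.2 k).const_mul _).sub ((memLp_condRmsNormalize (hF_le t) (hd t k)).const_mul _)
  have hstep := fun t => integral_sum_sq_condRmsNormalize_step_le (hF_le t) hlam (hα t) (hαlam t)
    (hx t).1 (hx t).2 (hd t) (hiter t) (haiming t)
  intro t _
  rw [hBstar, Finset.mul_sum]
  simpa [mul_comm] using le_add_sum_range_of_succ_le
    (u := fun t => ∫ ω, ∑ k, (x t ω k - xstar k) ^ 2 ∂μ) hstep t

/-- Uniform bound on expected squared distance (inequality (dist-upper-bound)). -/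
theorem bcosw_dist_upper_bound
    {Ω : Type*} {mΩ : MeasurableSpace Ω} {μ : Measure Ω} [IsProbabilityMeasure μ]
    (F : ℕ → MeasurableSpace Ω) (hF_le : ∀ t, F t ≤ mΩ) (hF_mono : Monotone F)
    {n : ℕ} (hn : 1 ≤ n) (lam : ℝ) (hlam : 0 ≤ lam)
    (xstar : Fin n → ℝ) (α : ℕ → ℝ)
    (hα : ∀ s, 0 ≤ α s) (hαlam : ∀ s, α s * lam ≤ 1)
    (d : ℕ → Ω → Fin n → ℝ)
    (hd_meas : ∀ t k, Measurable[F (t + 1)] fun ω => d t ω k)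
    (hd_sq_int : ∀ t k, Integrable (fun ω => (d t ω k) ^ 2) μ)
    (hd2_pos : ∀ t k, ∀ᵐ ω ∂μ, 0 < (μ[fun ω' => (d t ω' k) ^ 2|F t]) ω)
    (x : ℕ → Ω → Fin n → ℝ)
    (hx0_meas : ∀ k, Measurable[F 0] fun ω => x 0 ω k)
    (hx0_sq_int : ∀ k, Integrable (fun ω => (x 0 ω k) ^ 2) μ)
    (hiter : ∀ t ω k, x (t + 1) ω k
      = (1 - α t * lam) * x t ω k
        - α t * (d t ω k / Real.sqrt ((μ[fun ω' => (d t ω' k) ^ 2|F t]) ω)))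
    (haiming : ∀ t, ∀ᵐ ω ∂μ,
      (∑ k, (x t ω k - xstar k) *
          ((μ[fun ω' => d t ω' k|F t]) ω
              / Real.sqrt ((μ[fun ω' => (d t ω' k) ^ 2|F t]) ω)
            + lam * x t ω k))
        ≥ lam * ∑ k, (x t ω k - xstar k) ^ 2)
    (Bstar : ℝ)
    (hBstar : Bstar = (n : ℝ) + lam ^ 2 * (∑ k, (xstar k) ^ 2)
        + 2 * lam * ∑ k, |xstar k|) :
    ∀ t : ℕ, 1 ≤ t →
      (∫ ω, ∑ k, (x t ω k - xstar k) ^ 2 ∂μ)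
        ≤ (∫ ω, ∑ k, (x 0 ω k - xstar k) ^ 2 ∂μ)
          + Bstar * ∑ s ∈ Finset.range t, (α s) ^ 2 :=
  bcosw_dist_upper_bound_general F hF_le hF_mono lam hlam xstar α hα hαlam d hd_meas hd_sq_int x
    hx0_meas hx0_sq_int hiter haiming Bstar hBstar
end
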